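/- Any critical point of the smoothed unbalanced OT objective F(T) = ⟨C,T⟩ + (1/λ)Σ T_{ij} log T_{ij} + α D_KL(T1, x) + β D_KL(Tᵀ1, y) with positive entries has the diagonal scaling form T_{ij} = u_i K_{ij} v_j, where K_{ij} = exp(-λ C_{ij} - 1), u_i = (x_i / (T1)_i)^{λα}, and v_j = (y_j / (Tᵀ1)_j)^{λβ}. -/
import Mathlib


/-- Any critical point (with positive entries) of the smoothed unbalanced OT objective
has the diagonal scaling form `T_{ij} = u_i K_{ij} v_j` with
`K_{ij} = exp(-λ C_{ij} - 1)`, `u_i = (x_i/(T1)_i)^{λα}`, `v_j = (y_j/(Tᵀ1)_j)^{λβ}`. -/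
theorem stmt_10 (m : ℕ) (C T : Matrix (Fin m) (Fin m) ℝ) (x y : Fin m → ℝ)
    (lam α β : ℝ) (hlam : 0 < lam) (hα : 0 < α) (hβ : 0 < β)
    (hT : ∀ i j, 0 < T i j) (hx : ∀ i, 0 < x i) (hy : ∀ j, 0 < y j)
    (hcrit : ∀ i j, C i j + (1 / lam) * (Real.log (T i j) + 1)
        + α * Real.log ((∑ k, T i k) / x i)
        + β * Real.log ((∑ k, T k j) / y j) = 0) :
    ∀ i j, T i j = (x i / ∑ k, T i k) ^ (lam * α)
      * Real.exp (-lam * C i j - 1) * (y j / ∑ k, T k j) ^ (lam * β) := by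
  intro i j
  have : Nonempty (Fin m) := ⟨i⟩
  have hR : 0 < ∑ k, T i k := Finset.sum_pos (fun k _ => hT i k) Finset.univ_nonempty
  have hCc : 0 < ∑ k, T k j := Finset.sum_pos (fun k _ => hT k j) Finset.univ_nonempty
  have h := hcrit i j
  have hlogT : Real.log (T i j) = -lam * C i j - 1
      + lam * α * Real.log (x i / ∑ k, T i k)
      + lam * β * Real.log (y j / ∑ k, T k j) := by
    rw [Real.log_div (hx i).ne' hR.ne', Real.log_div (hy j).ne' hCc.ne']
    have h1 : Real.log ((∑ k, T i k) / x i) = Real.log (∑ k, T i k) - Real.log (x i) :=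
      Real.log_div hR.ne' (hx i).ne'
    have h2 : Real.log ((∑ k, T k j) / y j) = Real.log (∑ k, T k j) - Real.log (y j) :=
      Real.log_div hCc.ne' (hy j).ne'
    rw [h1, h2] at h
    field_simp at h ⊢
    nlinarith [h]
  have hTe : T i j = Real.exp (Real.log (T i j)) := (Real.exp_log (hT i j)).symm
  rw [hTe, hlogT]
  rw [show (x i / ∑ k, T i k) ^ (lam * α) = Real.exp (lam * α * Real.log (x i / ∑ k, T i k)) by
      rw [Real.rpow_def_of_pos (div_pos (hx i) hR), mul_comm],
    show (y j / ∑ k, T k j) ^ (lam * β) = Real.exp (lam * β * Real.log (y j / ∑ k, T k j)) by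
      rw [Real.rpow_def_of_pos (div_pos (hy j) hCc), mul_comm],
    ← Real.exp_add, ← Real.exp_add]
  ring_nf
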